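/- arXiv:2212.11371 — 2 statements merged into one kernel-verified Lean document; each statement's English description precedes it below -/
import Mathlib

section
/- For every bi-infinite sequence α = (α_n)_{n∈ℤ} with α_n ∈ {1,2} for all n, and all integers j ≥ 1 and k ≥ 1, the following upper bound holds: λ₀(α) ≤ [α₀; α₁, …, α_j, T(j)] + [0; α_{−1}, …, α_{−k}, T(k)], where T(n) denotes the periodic tail 1,2,1,2,1,2,… if n is even, and the periodic tail 2,1,2,1,2,1,… if n is odd. Explicitly: if k and j are both even, λ₀(α) ≤ [α₀; α₁, …, α_j, \overline{1,2}] + [0; α_{−1}, …, α_{−k}, \overline{1,2}]; if k is even and j is odd, λ₀(α) ≤ [α₀; α₁, …, α_j, \overline{2,1}] + [0; α_{−1}, …, α_{−k}, \overline{1,2}]; if k is odd and j is even, λ₀(α) ≤ [α₀; α₁, …, α_j, \overline{1,2}] + [0; α_{−1}, …, α_{−k}, \overline{2,1}]; if k and j are both odd, λ₀(α) ≤ [α₀; α₁, …, α_j, \overline{2,1}] + [0; α_{−1}, …, α_{−k}, \overline{2,1}]. -/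
open Filter Set MeasureTheory
open scoped ENNReal

/-- Finite continued fraction `[a 0; a 1, ..., a n]`. -/
noncomputable def cfConv : (ℕ → ℝ) → ℕ → ℝ
  | a, 0 => a 0
  | a, n + 1 => a 0 + 1 / cfConv (fun i => a (i + 1)) n

/-- Value of the infinite continued fraction `[a 0; a 1, a 2, ...]`,
as the limit of its convergents. -/
noncomputable def cfVal (a : ℕ → ℝ) : ℝ := limUnder atTop (cfConv a)

/-- `λ_k(α) = [α_k; α_{k+1}, ...] + [0; α_{k-1}, α_{k-2}, ...]`. -/
noncomputable def lambdaVal (α : ℤ → ℕ) (k : ℤ) : ℝ :=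
  cfVal (fun n => (α (k + n) : ℝ)) +
  cfVal (fun n => if n = 0 then 0 else (α (k - n) : ℝ))

/-- The Markov value `m(α) = sup_{k ∈ ℤ} λ_k(α)`. -/
noncomputable def markovValue (α : ℤ → ℕ) : ℝ := ⨆ k : ℤ, lambdaVal α k

/-- The Markov spectrum. -/
def markovSpectrum : Set ℝ :=
  { x | ∃ α : ℤ → ℕ, (∀ n, 0 < α n) ∧ BddAbove (range (lambdaVal α)) ∧
      markovValue α = x }

/-- The dimension function `d(t) = dim_H (M ∩ (-∞, t))`. -/
noncomputable def dimFun (t : ℝ) : ℝ≥0∞ := dimH (markovSpectrum ∩ Iio t)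

/-- `[a 0; a 1, …, a j, \overline{b₁, b₂}]` : the infinite continued fraction
keeping the entries of `a` up to index `j` and with eventually periodic tail
alternating `b₁, b₂, b₁, b₂, …` from position `j + 1` on. -/
noncomputable def tailCF (a : ℕ → ℝ) (j : ℕ) (b₁ b₂ : ℝ) : ℝ :=
  cfVal (fun n => if n ≤ j then a n else if (n - j) % 2 = 1 then b₁ else b₂)

/-! `[a₀; a₁, a₂, …]` increases in its even-indexed and decreases in its odd-indexed entries,
so among entries in `[1, 2]` the tail after position `j` is maximised by putting `2` at even and
`1` at odd positions, which is exactly `T(j)`. The comparison holds for all convergents and passes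
to the limit, which exists because for entries in `[1, M]` the map `x ↦ a₀ + 1/x` shrinks the
distance between consecutive convergents by the factor `(M + 1)/(M + 2)`. -/

open Filter Topology

variable {a b : ℕ → ℝ} {M N : ℝ}

lemma cfConv_succ (a : ℕ → ℝ) (n : ℕ) :
    cfConv a (n + 1) = a 0 + 1 / cfConv (fun i => a (i + 1)) n := rfl

lemma cfConv_pos (ha : ∀ i, 0 < a i) (n : ℕ) : 0 < cfConv a n := by
  induction n generalizing a with
  | zero => exact ha 0
  | succ n ih => exact add_pos (ha 0) (one_div_pos.mpr (ih fun i => ha (i + 1)))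

lemma one_le_cfConv (ha : ∀ i, 1 ≤ a i) (n : ℕ) : 1 ≤ cfConv a n := by
  induction n generalizing a with
  | zero => exact ha 0
  | succ n ih =>
    have := one_div_pos.mpr (zero_lt_one.trans_le (ih fun i => ha (i + 1)))
    rw [cfConv_succ]
    linarith [ha 0]

lemma cfConv_le_add_one (ha : ∀ i, 1 ≤ a i ∧ a i ≤ M) (n : ℕ) : cfConv a n ≤ M + 1 := by
  cases n with
  | zero => exact (ha 0).2.trans (le_add_of_nonneg_right zero_le_one)
  | succ n =>
    have hx := one_le_cfConv (fun i => (ha (i + 1)).1) n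
    have : 1 / cfConv (fun i => a (i + 1)) n ≤ 1 := (div_le_one (by linarith)).2 hx
    rw [cfConv_succ]
    linarith [(ha 0).2]

lemma one_add_one_div_le_cfConv_succ (ha : ∀ i, 1 ≤ a i ∧ a i ≤ M) (n : ℕ) :
    1 + 1 / (M + 1) ≤ cfConv a (n + 1) := by
  have hx := one_le_cfConv (fun i => (ha (i + 1)).1) n
  have := one_div_le_one_div_of_le (by linarith) (cfConv_le_add_one (fun i => ha (i + 1)) n)
  rw [cfConv_succ]
  linarith [(ha 0).1]

lemma dist_cfConv_succ_le (ha : ∀ i, 1 ≤ a (i + 1) ∧ a (i + 1) ≤ M) (n : ℕ) :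
    dist (cfConv a n) (cfConv a (n + 1)) ≤ ((M + 1) / (M + 2)) ^ n := by
  induction n generalizing a with
  | zero =>
    have ha1 : 0 < a 1 := one_pos.trans_le (ha 0).1
    show dist (a 0) (a 0 + 1 / a 1) ≤ _
    rw [dist_self_add_right, pow_zero, Real.norm_of_nonneg (one_div_pos.2 ha1).le]
    exact (div_le_one ha1).2 (ha 0).1
  | succ n ih =>
    set x := cfConv (fun i => a (i + 1)) n
    set y := cfConv (fun i => a (i + 1)) (n + 1)
    have hM : 1 ≤ M := (ha 0).1.trans (ha 0).2
    have hx : 1 ≤ x := one_le_cfConv (fun i => (ha i).1) n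
    have hy : (M + 2) / (M + 1) ≤ y := by
      have := one_add_one_div_le_cfConv_succ (fun i => ha i) n
      rwa [one_add_div (by linarith), add_assoc, one_add_one_eq_two] at this
    have hq : 0 < (M + 2) / (M + 1) := div_pos (by linarith) (by linarith)
    have hy0 : 0 < y := hq.trans_le hy
    have hxy : (M + 2) / (M + 1) ≤ x * y := by nlinarith
    rw [cfConv_succ a (n + 1), cfConv_succ a n, dist_add_left, one_div, one_div,
      dist_inv_inv₀ (by linarith) hy0.ne', Real.norm_of_nonneg (by linarith),
      Real.norm_of_nonneg hy0.le, pow_succ]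
    calc dist x y / (x * y) ≤ ((M + 1) / (M + 2)) ^ n / ((M + 2) / (M + 1)) :=
          div_le_div₀ (pow_nonneg (div_nonneg (by linarith) (by linarith)) n)
            (ih fun i => ha (i + 1)) hq hxy
      _ = ((M + 1) / (M + 2)) ^ n * ((M + 1) / (M + 2)) := by rw [div_eq_mul_inv, inv_div]

lemma tendsto_cfConv_cfVal (ha : ∀ i, 1 ≤ a (i + 1) ∧ a (i + 1) ≤ M) :
    Tendsto (cfConv a) atTop (𝓝 (cfVal a)) := by
  have hM : 1 ≤ M := (ha 0).1.trans (ha 0).2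
  have hq : (M + 1) / (M + 2) < 1 := (div_lt_one (by linarith)).2 (by linarith)
  refine (cauchySeq_of_le_geometric _ 1 hq fun n => ?_).tendsto_limUnder
  simpa only [one_mul] using dist_cfConv_succ_le ha n

lemma cfConv_le_cfConv (ha : ∀ i, 0 < a (i + 1)) (hb : ∀ i, 0 < b (i + 1))
    (heven : ∀ i, Even i → a i ≤ b i) (hodd : ∀ i, Odd i → b i ≤ a i) (n : ℕ) :
    cfConv a n ≤ cfConv b n := by
  induction n generalizing a b with
  | zero => exact heven 0 Even.zero
  | succ n ih =>
    have hba : cfConv (fun i => b (i + 1)) n ≤ cfConv (fun i => a (i + 1)) n :=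
      ih (fun i => hb (i + 1)) (fun i => ha (i + 1)) (fun i hi => hodd (i + 1) hi.add_one)
        (fun i hi => heven (i + 1) hi.add_one)
    exact add_le_add (heven 0 Even.zero) (one_div_le_one_div_of_le (cfConv_pos hb n) hba)

lemma cfVal_le_cfVal (ha : ∀ i, 1 ≤ a (i + 1) ∧ a (i + 1) ≤ M)
    (hb : ∀ i, 1 ≤ b (i + 1) ∧ b (i + 1) ≤ N)
    (heven : ∀ i, Even i → a i ≤ b i) (hodd : ∀ i, Odd i → b i ≤ a i) :
    cfVal a ≤ cfVal b :=
  le_of_tendsto_of_tendsto' (tendsto_cfConv_cfVal ha) (tendsto_cfConv_cfVal hb)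
    (cfConv_le_cfConv (fun i => one_pos.trans_le (ha i).1) (fun i => one_pos.trans_le (hb i).1)
      heven hodd)

lemma cfVal_le_tailCF (ha : ∀ i, 1 ≤ a (i + 1) ∧ a (i + 1) ≤ 2) (j : ℕ) :
    cfVal a ≤ tailCF a j (if j % 2 = 0 then 1 else 2) (if j % 2 = 0 then 2 else 1) := by
  set b : ℕ → ℝ := fun n => if n ≤ j then a n else
    if (n - j) % 2 = 1 then (if j % 2 = 0 then 1 else 2) else (if j % 2 = 0 then 2 else 1)
  have hb_tail : ∀ n, j < n → b n = if Even n then 2 else 1 := by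
    intro n hn
    simp only [b, Nat.even_iff]
    split_ifs <;> first | rfl | omega
  have hb_head : ∀ n, n ≤ j → b n = a n := fun n hn => if_pos hn
  refine cfVal_le_cfVal (b := b) (N := 2) ha (fun i => ?_) (fun i hi => ?_) (fun i hi => ?_)
  · rcases le_or_gt (i + 1) j with h | h
    · rw [hb_head _ h]; exact ha i
    · rw [hb_tail _ h]; split_ifs <;> norm_num
  · rcases le_or_gt i j with h | h
    · rw [hb_head _ h]
    · obtain ⟨i, rfl⟩ : ∃ i', i = i' + 1 := Nat.exists_eq_add_one.2 (by omega)
      rw [hb_tail _ h, if_pos hi]; exact (ha i).2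
  · rcases le_or_gt i j with h | h
    · rw [hb_head _ h]
    · obtain ⟨i, rfl⟩ : ∃ i', i = i' + 1 := Nat.exists_eq_add_one.2 (by omega)
      rw [hb_tail _ h, if_neg (Nat.not_even_iff_odd.2 hi)]; exact (ha i).1

theorem lambda_zero_upper_bound_general (α : ℤ → ℕ) (hα : ∀ n, α n = 1 ∨ α n = 2)
    (j k : ℕ) :
    lambdaVal α 0 ≤
      tailCF (fun n => (α n : ℝ)) j
        (if j % 2 = 0 then 1 else 2) (if j % 2 = 0 then 2 else 1) +
      tailCF (fun n => if n = 0 then 0 else (α (-(n : ℤ)) : ℝ)) k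
        (if k % 2 = 0 then 1 else 2) (if k % 2 = 0 then 2 else 1) := by
  have hα' : ∀ m, 1 ≤ (α m : ℝ) ∧ (α m : ℝ) ≤ 2 := fun m => by
    rcases hα m with h | h <;> norm_num [h]
  simp only [lambdaVal, zero_add, zero_sub]
  exact add_le_add (cfVal_le_tailCF (fun i => hα' _) j)
    (cfVal_le_tailCF (fun i => by simpa using hα' _) k)

/-- Upper bound on `λ₀(α)` for `α ∈ {1,2}^ℤ`: truncating at positions `j` (forward)
and `-k` (backward) and appending the periodic tail `\overline{1,2}` if the
truncation index is even, and `\overline{2,1}` if it is odd, can only increase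
the value. -/
theorem lambda_zero_upper_bound (α : ℤ → ℕ) (hα : ∀ n, α n = 1 ∨ α n = 2)
    (j k : ℕ) (hj : 1 ≤ j) (hk : 1 ≤ k) :
    lambdaVal α 0 ≤
      tailCF (fun n => (α n : ℝ)) j
        (if j % 2 = 0 then 1 else 2) (if j % 2 = 0 then 2 else 1) +
      tailCF (fun n => if n = 0 then 0 else (α (-(n : ℤ)) : ℝ)) k
        (if k % 2 = 0 then 1 else 2) (if k % 2 = 0 then 2 else 1) :=
  lambda_zero_upper_bound_general α hα j k
end

section
/- Every bi-infinite sequence α ∈ {1,2}^ℤ that contains the word (1,2,1) as a factor satisfies m(α) ≥ √10, and the value √10 is attained: the periodic sequence of period (1,1,2), which contains the factor (1,2,1), has Markov value [2; \overline{1,1,2}] + [0; \overline{1,1,2}] = √10. Thus √10 is the smallest Markov value among {1,2}-sequences containing the factor (1,2,1). -/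
/-!
Around an occurrence of `1, 2, 1` centred at `j`,
`λ_j(α) = 2 + [0; 1, α_{j+2}, …] + [0; 1, α_{j-2}, …]`, and crude bounds on the tails show that
`λ_j(α) < √10` forces the next three letters on both sides to be `1, 2, 1` again. So if
`m(α) < √10` the block propagates and `α` is a shift of `…112112…`, whose value at a `2` is
`[2; \overline{1,1,2}] + [0; \overline{1,1,2}] = √10`, a contradiction. For that periodic
sequence the positions carrying a `1` have `λ ≤ 3 < √10`, so `√10` is its Markov value.
-/

open Filter Set MeasureTheory
open scoped ENNReal

/-- A finite word `w` is a factor of the bi-infinite sequence `α`. -/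
def hasFactor (α : ℤ → ℕ) (w : List ℕ) : Prop :=
  ∃ j : ℤ, ∀ i : Fin w.length, α (j + (i : ℕ)) = w.get i

/-- The bi-infinite periodic sequence of period `(1,1,2)`. -/
def per112 : ℤ → ℕ := fun n => if n % 3 = 2 then 2 else 1

open scoped Topology

/-- `cfEval a n x = [a 0; a 1, …, a (n - 1), x]`. -/
noncomputable def cfEval : (ℕ → ℝ) → ℕ → ℝ → ℝ
  | _, 0, x => x
  | a, n + 1, x => a 0 + 1 / cfEval (fun i => a (i + 1)) n x

lemma cfConv_eq_cfEval (n : ℕ) (a : ℕ → ℝ) : cfConv a n = cfEval a n (a n) := by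
  induction n generalizing a with
  | zero => rfl
  | succ n ih => exact congrArg (a 0 + 1 / ·) (ih _)

lemma cfConv_succ_eq_cfEval (n : ℕ) (a : ℕ → ℝ) :
    cfConv a (n + 1) = cfEval a n (a n + 1 / a (n + 1)) := by
  induction n generalizing a with
  | zero => rfl
  | succ n ih => exact congrArg (a 0 + 1 / ·) (ih _)

lemma one_le_cfEval {a : ℕ → ℝ} (ha : ∀ i, 1 ≤ a i) {x : ℝ} (hx : 1 ≤ x) (n : ℕ) :
    1 ≤ cfEval a n x := by
  induction n generalizing a with
  | zero => exact hx
  | succ n ih =>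
    have := ih fun i => ha (i + 1)
    simp only [cfEval]
    linarith [ha 0, show 0 < 1 / cfEval (fun i => a (i + 1)) n x by positivity]

lemma abs_one_div_sub_one_div_le {u v : ℝ} (hu : 1 ≤ u) (hv : 1 ≤ v) :
    |1 / u - 1 / v| ≤ |u - v| := by
  have huv : 1 ≤ u * v := one_le_mul_of_one_le_of_one_le hu hv
  have huv₀ : 0 < u * v := by linarith
  rw [div_sub_div _ _ (by linarith) (by linarith), abs_div, abs_of_pos huv₀,
    div_le_iff₀ huv₀, one_mul, mul_one, abs_sub_comm]
  nlinarith [abs_nonneg (u - v)]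

lemma abs_one_div_add_one_div_sub_le {b u v : ℝ} (hb : 1 ≤ b) (hu : 1 ≤ u) (hv : 1 ≤ v) :
    |1 / (b + 1 / u) - 1 / (b + 1 / v)| ≤ |u - v| / 4 := by
  have key : 1 / (b + 1 / u) - 1 / (b + 1 / v) = (u - v) / ((b * u + 1) * (b * v + 1)) := by
    field_simp
    ring
  have hbu : 2 ≤ b * u + 1 := by nlinarith
  have hbv : 2 ≤ b * v + 1 := by nlinarith
  have hden : 4 ≤ (b * u + 1) * (b * v + 1) := by nlinarith
  rw [key, abs_div, abs_of_pos (by linarith : (0 : ℝ) < (b * u + 1) * (b * v + 1))]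
  exact div_le_div_of_nonneg_left (abs_nonneg _) (by norm_num) hden

lemma abs_cfEval_sub_le {a : ℕ → ℝ} (ha : ∀ i, 1 ≤ a i) {x y : ℝ} (hx : 1 ≤ x) (hy : 1 ≤ y)
    (n : ℕ) : |cfEval a n x - cfEval a n y| ≤ 2 * (1 / 2) ^ n * |x - y| := by
  induction n using Nat.twoStepInduction generalizing a with
  | zero => simp only [cfEval]; linarith [abs_nonneg (x - y)]
  | one =>
    simp only [cfEval, add_sub_add_left_eq_sub]
    linarith [abs_one_div_sub_one_div_le hx hy]
  | more n ih _ =>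
    have hshift : ∀ i, 1 ≤ a (i + 2) := fun i => ha (i + 2)
    simp only [cfEval, add_sub_add_left_eq_sub]
    calc _ ≤ |cfEval (fun i => a (i + 2)) n x - cfEval (fun i => a (i + 2)) n y| / 4 :=
          abs_one_div_add_one_div_sub_le (ha 1) (one_le_cfEval hshift hx n)
            (one_le_cfEval hshift hy n)
      _ ≤ 2 * (1 / 2) ^ n * |x - y| / 4 := by gcongr; exact ih hshift
      _ = 2 * (1 / 2) ^ (n + 2) * |x - y| := by ring

lemma tendsto_cfConv {a : ℕ → ℝ} (ha : ∀ n, 1 ≤ a n) :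
    Tendsto (cfConv a) atTop (𝓝 (cfVal a)) := by
  have hcauchy : CauchySeq (cfConv a) := by
    refine cauchySeq_of_le_geometric (1 / 2) 2 (by norm_num) fun n => ?_
    have hpos : 0 < a (n + 1) := by linarith [ha (n + 1)]
    have hinv : 0 < 1 / a (n + 1) ∧ 1 / a (n + 1) ≤ 1 :=
      ⟨one_div_pos.mpr hpos, div_le_one_of_le₀ (ha (n + 1)) hpos.le⟩
    rw [Real.dist_eq, cfConv_eq_cfEval, cfConv_succ_eq_cfEval]
    calc _ ≤ 2 * (1 / 2) ^ n * |a n - (a n + 1 / a (n + 1))| :=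
          abs_cfEval_sub_le ha (ha n) (by linarith [ha n]) n
      _ ≤ 2 * (1 / 2) ^ n := by
          rw [sub_add_cancel_left, abs_neg, abs_of_pos hinv.1]
          exact mul_le_of_le_one_right (by positivity) hinv.2
  obtain ⟨L, hL⟩ := cauchySeq_tendsto_of_complete hcauchy
  rwa [cfVal, hL.limUnder_eq]

lemma one_le_cfVal {a : ℕ → ℝ} (ha : ∀ n, 1 ≤ a n) : 1 ≤ cfVal a :=
  ge_of_tendsto' (tendsto_cfConv ha) fun n => by
    rw [cfConv_eq_cfEval]; exact one_le_cfEval ha (ha n) n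

lemma cfVal_eq_add_one_div {a : ℕ → ℝ} (ha : ∀ n, 1 ≤ a (n + 1)) :
    cfVal a = a 0 + 1 / cfVal (fun n => a (n + 1)) := by
  have htail := tendsto_cfConv ha
  have hsucc : Tendsto (fun n => cfConv a (n + 1)) atTop
      (𝓝 (a 0 + 1 / cfVal (fun n => a (n + 1)))) :=
    tendsto_const_nhds.add (tendsto_const_nhds.div htail (by linarith [one_le_cfVal ha]))
  rw [cfVal, ((tendsto_add_atTop_iff_nat 1).mp hsucc).limUnder_eq]

lemma cfVal_eq_cfEval {a : ℕ → ℝ} (ha : ∀ n, 1 ≤ a (n + 1)) (n : ℕ) :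
    cfVal a = cfEval a n (cfVal fun i => a (i + n)) := by
  induction n generalizing a with
  | zero => rfl
  | succ n ih =>
    rw [cfVal_eq_add_one_div ha, ih fun i => ha (i + 1)]
    simp only [cfEval, add_assoc]

lemma cfVal_le_three {a : ℕ → ℝ} (ha : ∀ n, a n ∈ Icc (1 : ℝ) 2) : cfVal a ≤ 3 := by
  have htail : ∀ n, 1 ≤ a (n + 1) := fun n => (ha (n + 1)).1
  have h₁ := one_le_cfVal htail
  have hinv : 1 / cfVal (fun n => a (n + 1)) ≤ 1 := div_le_one_of_le₀ h₁ (by linarith)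
  rw [cfVal_eq_add_one_div htail]
  linarith [(ha 0).2]

lemma cfVal_mem_Icc_of_forall {L U : ℝ} (hL : 0 < L)
    (h : ∀ b : ℕ → ℝ, (∀ n, b n ∈ Icc (1 : ℝ) 2) → cfVal b ∈ Icc L U)
    {a : ℕ → ℝ} (ha : ∀ n, a n ∈ Icc (1 : ℝ) 2) : cfVal a ∈ Icc (1 + 1 / U) (2 + 1 / L) := by
  obtain ⟨hlo, hhi⟩ := h _ fun n => ha (n + 1)
  rw [cfVal_eq_add_one_div fun n => (ha (n + 1)).1]
  exact ⟨add_le_add (ha 0).1 (one_div_le_one_div_of_le (hL.trans_le hlo) hhi),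
    add_le_add (ha 0).2 (one_div_le_one_div_of_le hL hlo)⟩

lemma fifteen_div_eleven_le_cfVal {a : ℕ → ℝ} (ha : ∀ n, a n ∈ Icc (1 : ℝ) 2) :
    15 / 11 ≤ cfVal a := by
  have h₀ : ∀ b : ℕ → ℝ, (∀ n, b n ∈ Icc (1 : ℝ) 2) → cfVal b ∈ Icc 1 3 :=
    fun b hb => ⟨one_le_cfVal fun n => (hb n).1, cfVal_le_three hb⟩
  have h₁ := fun b hb => cfVal_mem_Icc_of_forall one_pos h₀ (a := b) hb
  have h₂ := fun b hb => cfVal_mem_Icc_of_forall (by norm_num) h₁ (a := b) hb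
  have h₃ := (cfVal_mem_Icc_of_forall (by norm_num) h₂ ha).1
  norm_num at h₃
  exact h₃

noncomputable def cfForward (α : ℤ → ℕ) (j : ℤ) : ℝ := cfVal fun n => (α (j + n) : ℝ)

def reverseSeq (α : ℤ → ℕ) : ℤ → ℕ := fun n => α (-n)

section Positive

variable {α : ℤ → ℕ} (hα : ∀ n, 0 < α n)
include hα

lemma one_le_cast_of_pos (n : ℤ) : (1 : ℝ) ≤ α n := Nat.one_le_cast.mpr (hα n)

lemma one_le_cfForward (j : ℤ) : 1 ≤ cfForward α j :=
  one_le_cfVal fun _ => one_le_cast_of_pos hα _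

lemma cfForward_eq_add_one_div (j : ℤ) :
    cfForward α j = α j + 1 / cfForward α (j + 1) := by
  rw [cfForward, cfVal_eq_add_one_div fun _ => one_le_cast_of_pos hα _]
  simp only [cfForward, Nat.cast_zero, add_zero, Nat.cast_add, Nat.cast_one]
  congr 3
  funext n
  ring_nf

lemma lambdaVal_eq (k : ℤ) :
    lambdaVal α k = α k + 1 / cfForward α (k + 1) + 1 / cfForward (reverseSeq α) (1 - k) := by
  have hback : cfVal (fun n => if n = 0 then 0 else (α (k - n) : ℝ)) =
      1 / cfForward (reverseSeq α) (1 - k) := by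
    rw [cfVal_eq_add_one_div fun _ => by simpa using one_le_cast_of_pos hα _]
    simp only [cfForward, reverseSeq, Nat.add_one_ne_zero, if_true, if_false, zero_add]
    congr 2
    funext n
    push_cast
    ring_nf
  rw [lambdaVal, hback, ← cfForward, cfForward_eq_add_one_div hα]

lemma lambdaVal_le_add_two (k : ℤ) : lambdaVal α k ≤ α k + 2 := by
  have hF := one_le_cfForward hα (k + 1)
  have hB := one_le_cfForward (α := reverseSeq α) (fun n => hα (-n)) (1 - k)
  rw [lambdaVal_eq hα]
  linarith [div_le_one_of_le₀ hF (by linarith), div_le_one_of_le₀ hB (by linarith)]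

lemma lambdaVal_reverseSeq (k : ℤ) : lambdaVal (reverseSeq α) (-k) = lambdaVal α k := by
  have hrev : reverseSeq (reverseSeq α) = α := funext fun n => by simp [reverseSeq]
  rw [lambdaVal_eq hα, lambdaVal_eq (α := reverseSeq α) fun n => hα (-n), hrev]
  simp only [reverseSeq, neg_neg]
  ring_nf

end Positive

lemma lambdaVal_comp_add (α : ℤ → ℕ) (c k : ℤ) :
    lambdaVal (fun n => α (n + c)) k = lambdaVal α (k + c) := by
  simp only [lambdaVal]
  congr 3 <;> funext n <;> ring_nf

lemma markovValue_eq_lambdaVal_of_forall_le {α : ℤ → ℕ} {k : ℤ}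
    (h : ∀ j, lambdaVal α j ≤ lambdaVal α k) : markovValue α = lambdaVal α k :=
  le_antisymm (ciSup_le h) (le_ciSup ⟨_, forall_mem_range.mpr h⟩ k)

lemma pos_of_eq_one_or_two {α : ℤ → ℕ} (hα : ∀ n, α n = 1 ∨ α n = 2) (n : ℤ) : 0 < α n := by
  rcases hα n with h | h <;> simp [h]

lemma lambdaVal_le_markovValue {α : ℤ → ℕ} (hα : ∀ n, α n = 1 ∨ α n = 2) (k : ℤ) :
    lambdaVal α k ≤ markovValue α := by
  refine le_ciSup ⟨4, forall_mem_range.mpr fun j => ?_⟩ k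
  have := lambdaVal_le_add_two (pos_of_eq_one_or_two hα) j
  rcases hα j with h | h <;> rw [h] at this <;> norm_num at this <;> linarith

def Has121At (α : ℤ → ℕ) (j : ℤ) : Prop := α (j - 1) = 1 ∧ α j = 2 ∧ α (j + 1) = 1

lemma has121At_reverseSeq {α : ℤ → ℕ} {j : ℤ} : Has121At (reverseSeq α) (-j) ↔ Has121At α j := by
  simp only [Has121At, reverseSeq, neg_neg, neg_sub', neg_add', sub_neg_eq_add]
  tauto

-- `15 / 26 = [0; 1, 15/11]` and `24 / 41 = [0; 1, 1, 2, 2, 3]`; the margin is about `10⁻⁵`.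
lemma sqrt_ten_lt : √10 < 2 + 15 / 26 + 24 / 41 := by
  rw [Real.sqrt_lt' (by norm_num)]; norm_num

section OneTwo

variable {α : ℤ → ℕ} (hα : ∀ n, α n = 1 ∨ α n = 2)
include hα

lemma cast_mem_Icc (n : ℤ) : (α n : ℝ) ∈ Icc (1 : ℝ) 2 := by
  rcases hα n with h | h <;> simp [h]

lemma fifteen_div_eleven_le_cfForward (j : ℤ) : 15 / 11 ≤ cfForward α j :=
  fifteen_div_eleven_le_cfVal fun _ => cast_mem_Icc hα _

lemma cfForward_le_three (j : ℤ) : cfForward α j ≤ 3 :=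
  cfVal_le_three fun _ => cast_mem_Icc hα _

lemma one_div_cfForward_lt_of_has121At {j : ℤ} (h : Has121At α j)
    (hlt : lambdaVal α j < √10) : 1 / cfForward α (j + 1) < 24 / 41 := by
  have hpos := pos_of_eq_one_or_two hα
  have hrev : ∀ n, reverseSeq α n = 1 ∨ reverseSeq α n = 2 := fun n => hα (-n)
  have hposRev := pos_of_eq_one_or_two hrev
  have hB : cfForward (reverseSeq α) (1 - j) ≤ 26 / 15 := by
    have h₂ := fifteen_div_eleven_le_cfForward hrev (1 - j + 1)
    have : 1 / cfForward (reverseSeq α) (1 - j + 1) ≤ 11 / 15 := by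
      rw [div_le_iff₀ (by linarith)]; linarith
    rw [cfForward_eq_add_one_div hposRev, reverseSeq, neg_sub, h.1]
    push_cast
    linarith
  have hB' : 15 / 26 ≤ 1 / cfForward (reverseSeq α) (1 - j) := by
    rw [le_div_iff₀ (by linarith [one_le_cfForward hposRev (1 - j)])]
    linarith
  rw [lambdaVal_eq hpos, h.2.1] at hlt
  push_cast at hlt
  linarith [sqrt_ten_lt]

lemma has121At_add_three {j : ℤ} (h : Has121At α j) (hlt : lambdaVal α j < √10) :
    Has121At α (j + 3) := by
  have hpos := pos_of_eq_one_or_two hα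
  set F : ℤ → ℝ := fun i => cfForward α (j + i)
  have hrec (i : ℤ) : F i = α (j + i) + 1 / F (i + 1) := by
    simp only [F, ← add_assoc]; exact cfForward_eq_add_one_div hpos _
  have hF₀ (i : ℤ) : 0 < F i := by linarith [one_le_cfForward hpos (j + i)]
  have hinv (i : ℤ) : 0 < 1 / F i ∧ 1 / F i ≤ 1 :=
    ⟨one_div_pos.mpr (hF₀ i), div_le_one_of_le₀ (one_le_cfForward hpos (j + i)) (hF₀ i).le⟩
  have hF₁ : F 1 = 1 + 1 / F 2 := by rw [hrec, h.2.2]; norm_num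
  have hsmall : 1 / F 1 < 24 / 41 := one_div_cfForward_lt_of_has121At hα h hlt
  -- Each deviation from `1, 2, 1` makes `1 / F 1 = [0; 1, α (j + 2), α (j + 3), …]` too large.
  rcases hα (j + 2) with h₂ | h₂
  swap
  · have : 2 ≤ F 2 := by rw [hrec, h₂]; push_cast; linarith [hinv 3]
    have : F 1 ≤ 3 / 2 := by rw [hF₁]; linarith [one_div_le_one_div_of_le two_pos this]
    linarith [one_div_le_one_div_of_le (hF₀ 1) this]
  rcases hα (j + 3) with h₃ | h₃
  · have : F 3 ≤ 2 := by rw [hrec, h₃]; push_cast; linarith [hinv 4]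
    have : 3 / 2 ≤ F 2 := by
      rw [hrec, h₂]; push_cast; linarith [one_div_le_one_div_of_le (hF₀ 3) this]
    have : F 1 ≤ 5 / 3 := by
      rw [hF₁]; linarith [one_div_le_one_div_of_le (by norm_num) this]
    linarith [one_div_le_one_div_of_le (hF₀ 1) this]
  rcases hα (j + 4) with h₄ | h₄
  · exact ⟨by rwa [show j + 3 - 1 = j + 2 by ring], h₃, by rwa [show j + 3 + 1 = j + 4 by ring]⟩
  · have : 7 / 3 ≤ F 4 := by
      rw [hrec, h₄]; push_cast
      linarith [one_div_le_one_div_of_le (hF₀ 5) (cfForward_le_three hα (j + 5))]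
    have : F 3 ≤ 17 / 7 := by
      rw [hrec, h₃]; push_cast; linarith [one_div_le_one_div_of_le (by norm_num) this]
    have : 24 / 17 ≤ F 2 := by
      rw [hrec, h₂]; push_cast; linarith [one_div_le_one_div_of_le (hF₀ 3) this]
    have : F 1 ≤ 41 / 24 := by
      rw [hF₁]; linarith [one_div_le_one_div_of_le (by norm_num) this]
    linarith [one_div_le_one_div_of_le (hF₀ 1) this]

lemma has121At_sub_three {j : ℤ} (h : Has121At α j) (hlt : lambdaVal α j < √10) :
    Has121At α (j - 3) := by
  have hrev := has121At_add_three (α := reverseSeq α) (fun n => hα (-n))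
    (has121At_reverseSeq.mpr h) (by rwa [lambdaVal_reverseSeq (pos_of_eq_one_or_two hα)])
  rwa [show -j + 3 = -(j - 3) by ring, has121At_reverseSeq] at hrev

end OneTwo

lemma eq_per112_of_has121At {α : ℤ → ℕ} {j : ℤ} (h : Has121At α j)
    (hstep : ∀ i, Has121At α i → Has121At α (i + 3) ∧ Has121At α (i - 3)) :
    (fun n => α (n + (j - 2))) = per112 := by
  have hblock (q : ℤ) : Has121At α (j + 3 * q) := by
    induction q using Int.induction_on with
    | zero => simpa using h
    | succ q ih => simpa [mul_add, ← add_assoc] using (hstep _ ih).1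
    | pred q ih => simpa [mul_sub, ← add_sub_assoc] using (hstep _ ih).2
  funext n
  simp only [per112]
  rcases (by omega : n % 3 = 0 ∨ n % 3 = 1 ∨ n % 3 = 2) with hn | hn | hn
  · rw [if_neg (by omega), show n + (j - 2) = j + 3 * (n / 3 - 1) + 1 by omega]
    exact (hblock _).2.2
  · rw [if_neg (by omega), show n + (j - 2) = j + 3 * (n / 3) - 1 by omega]
    exact (hblock _).1
  · rw [if_pos hn, show n + (j - 2) = j + 3 * (n / 3) by omega]
    exact (hblock _).2.1

lemma cfVal_periodic_211 :
    cfVal (fun n => if n = 0 then 2 else if n % 3 = 0 then 2 else 1) = 1 + √10 / 2 := by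
  set a : ℕ → ℝ := fun n => if n = 0 then 2 else if n % 3 = 0 then 2 else 1
  have ha (n : ℕ) : 1 ≤ a n := by simp only [a]; split_ifs <;> norm_num
  have hper : (fun i => a (i + 3)) = a := by
    funext i
    have : (i + 3) % 3 = i % 3 := by omega
    rcases i with _ | i <;> simp [a, this]
  have hfix := cfVal_eq_cfEval (fun n => ha (n + 1)) 3
  rw [hper] at hfix
  set x := cfVal a
  have hx : 1 ≤ x := one_le_cfVal ha
  simp only [cfEval, a] at hfix
  norm_num at hfix
  field_simp at hfix
  have hsq : (2 * x - 2) ^ 2 = 10 := by linear_combination 2 * hfix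
  rw [← hsq, Real.sqrt_sq (by linarith)]
  ring

lemma cfVal_periodic_211_add_cfVal_periodic_011 :
    cfVal (fun n => if n = 0 then 2 else if n % 3 = 0 then 2 else 1) +
      cfVal (fun n => if n = 0 then 0 else if n % 3 = 0 then 2 else 1) = √10 := by
  set t : ℕ → ℝ := fun n => if (n + 1) % 3 = 0 then 2 else 1
  have ht (n : ℕ) : 1 ≤ t n := by simp only [t]; split_ifs <;> norm_num
  have hhead (c : ℝ) :
      cfVal (fun n => if n = 0 then c else if n % 3 = 0 then 2 else 1) = c + 1 / cfVal t := by
    rw [cfVal_eq_add_one_div (by simpa using ht)]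
    simp [t]
  have h₂ := hhead 2
  rw [cfVal_periodic_211] at h₂ ⊢
  rw [hhead 0]
  linarith

lemma per112_eq_one_or_two (n : ℤ) : per112 n = 1 ∨ per112 n = 2 := by
  unfold per112; split_ifs <;> simp

lemma hasFactor_per112 : hasFactor per112 [1, 2, 1] := ⟨1, by decide⟩

lemma lambdaVal_per112_two : lambdaVal per112 2 =
    cfVal (fun n => if n = 0 then 2 else if n % 3 = 0 then 2 else 1) +
      cfVal (fun n => if n = 0 then 0 else if n % 3 = 0 then 2 else 1) := by
  unfold lambdaVal per112
  congr 2 <;> funext n <;> split_ifs <;> first | omega | simp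

lemma lambdaVal_per112_two_eq_sqrt_ten : lambdaVal per112 2 = √10 := by
  rw [lambdaVal_per112_two, cfVal_periodic_211_add_cfVal_periodic_011]

lemma markovValue_per112 : markovValue per112 = lambdaVal per112 2 := by
  refine markovValue_eq_lambdaVal_of_forall_le fun k => ?_
  by_cases hk : k % 3 = 2
  · have hshift : (fun n => per112 (n + (k - 2))) = per112 := by
      funext n; simp only [per112]; split_ifs <;> omega
    have hk2 := lambdaVal_comp_add per112 (k - 2) 2
    rw [hshift, add_sub_cancel] at hk2
    exact hk2.ge
  · have h3 : (3 : ℝ) < √10 := by rw [Real.lt_sqrt (by norm_num)]; norm_num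
    have hle := lambdaVal_le_add_two (pos_of_eq_one_or_two per112_eq_one_or_two) k
    rw [per112, if_neg hk] at hle
    rw [lambdaVal_per112_two_eq_sqrt_ten]
    push_cast at hle
    linarith

lemma sqrt_ten_le_markovValue {α : ℤ → ℕ} (hα : ∀ n, α n = 1 ∨ α n = 2)
    (hf : hasFactor α [1, 2, 1]) : √10 ≤ markovValue α := by
  obtain ⟨j, hj⟩ := hf
  have h121 : Has121At α (j + 1) :=
    ⟨by simpa using hj 0, by simpa using hj 1, by simpa [add_assoc] using hj 2⟩
  by_contra! hlt
  have hsmall (i : ℤ) : lambdaVal α i < √10 := (lambdaVal_le_markovValue hα i).trans_lt hlt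
  have hper := eq_per112_of_has121At h121 fun i hi =>
    ⟨has121At_add_three hα hi (hsmall i), has121At_sub_three hα hi (hsmall i)⟩
  have hval := lambdaVal_comp_add α (j + 1 - 2) 2
  rw [hper, lambdaVal_per112_two_eq_sqrt_ten, add_sub_cancel] at hval
  exact (hsmall (j + 1)).ne hval.symm

/-- Every `α ∈ {1,2}^ℤ` containing the factor `(1,2,1)` has Markov value at least
`√10`, attained by the periodic sequence of period `(1,1,2)`, whose Markov value
is `[2; \overline{1,1,2}] + [0; \overline{1,1,2}] = √10`. Thus `√10` is the smallest
Markov value among `{1,2}`-sequences containing the factor `(1,2,1)`. -/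
theorem smallest_markov_value_with_121 :
    (∀ α : ℤ → ℕ, (∀ n, α n = 1 ∨ α n = 2) → hasFactor α [1, 2, 1] →
      Real.sqrt 10 ≤ markovValue α) ∧
    (∀ n, per112 n = 1 ∨ per112 n = 2) ∧
    hasFactor per112 [1, 2, 1] ∧
    markovValue per112 =
      cfVal (fun n => if n = 0 then 2 else if n % 3 = 0 then 2 else 1) +
        cfVal (fun n => if n = 0 then 0 else if n % 3 = 0 then 2 else 1) ∧
    cfVal (fun n => if n = 0 then 2 else if n % 3 = 0 then 2 else 1) +
        cfVal (fun n => if n = 0 then 0 else if n % 3 = 0 then 2 else 1) =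
      Real.sqrt 10 := by
  refine ⟨fun _ => sqrt_ten_le_markovValue, per112_eq_one_or_two, hasFactor_per112, ?_,
    cfVal_periodic_211_add_cfVal_periodic_011⟩
  rw [markovValue_per112, lambdaVal_per112_two]
end
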